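/- arXiv:2512.14147 — 4 statements merged into one kernel-verified Lean document; each statement's English description precedes it below -/
import Mathlib

section
/- Let G be a residually finite group acting on a metric space (X,d) by isometries. Then for every finite subset X₀ ⊆ X, every finite subset A ⊆ G and every ε > 0, there exist a finite metric space (Y,η), an action of G on Y by isometries, and a map f : X₀ → Y such that |d(g·x, h·y) − η(g·f(x), h·f(y))| ≤ ε for all g, h ∈ A and all x, y ∈ X₀. -/
open Pointwise

section RFaux

variable {G : Type} [Group G] {X : Type} [MetricSpace X] [MulAction G X]
variable {Q : Type} [Group Q] [DecidableEq G] [DecidableEq Q]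

/-- Candidate distances. -/
noncomputable def RFcand (ψ : G →* Q) (X₀ : Finset X) (K : Finset G) (N : ℕ) (C ε : ℝ)
    (a b : Q × {x // x ∈ X₀}) : Finset ℝ :=
  insert C ((((Finset.range (N+1)) ×ˢ (K ^ N)).filter
      (fun p => p.2 ∈ K ^ p.1 ∧ ψ p.2 = a.1⁻¹ * b.1)).image
    (fun p => dist (a.2 : X) (p.2 • (b.2 : X)) + ε * p.1))

noncomputable def RFd (ψ : G →* Q) (X₀ : Finset X) (K : Finset G) (N : ℕ) (C ε : ℝ)
    (a b : Q × {x // x ∈ X₀}) : ℝ :=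
  (RFcand ψ X₀ K N C ε a b).min' ⟨C, Finset.mem_insert_self _ _⟩

variable {ψ : G →* Q} {X₀ : Finset X} {K : Finset G} {N : ℕ} {C ε : ℝ}
variable {a b c : Q × {x // x ∈ X₀}}

lemma RFd_le_C : RFd ψ X₀ K N C ε a b ≤ C :=
  Finset.min'_le _ _ (Finset.mem_insert_self _ _)

lemma RFd_le (h1 : (1:G) ∈ K) {n : ℕ} {k : G} (hn : n ≤ N) (hk : k ∈ K ^ n)
    (hψk : ψ k = a.1⁻¹ * b.1) :
    RFd ψ X₀ K N C ε a b ≤ dist (a.2 : X) (k • (b.2 : X)) + ε * n := by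
  apply Finset.min'_le
  apply Finset.mem_insert_of_mem
  apply Finset.mem_image.2
  refine ⟨(n, k), Finset.mem_filter.2 ⟨Finset.mem_product.2 ⟨?_, ?_⟩, hk, hψk⟩, rfl⟩
  · exact Finset.mem_range.2 (Nat.lt_succ_of_le hn)
  · exact Finset.pow_subset_pow_right h1 hn hk

lemma RFd_cases :
    RFd ψ X₀ K N C ε a b = C ∨ ∃ n k, n ≤ N ∧ k ∈ K ^ n ∧ ψ k = a.1⁻¹ * b.1 ∧
      RFd ψ X₀ K N C ε a b = dist (a.2 : X) (k • (b.2 : X)) + ε * n := by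
  have hmem := Finset.min'_mem (RFcand ψ X₀ K N C ε a b) ⟨C, Finset.mem_insert_self _ _⟩
  rcases Finset.mem_insert.1 hmem with h | h
  · exact Or.inl h
  · obtain ⟨p, hp, hval⟩ := Finset.mem_image.1 h
    obtain ⟨hpr, hk, hψk⟩ := Finset.mem_filter.1 hp
    obtain ⟨hn, -⟩ := Finset.mem_product.1 hpr
    exact Or.inr ⟨p.1, p.2, Nat.lt_succ_iff.1 (Finset.mem_range.1 hn), hk, hψk, hval.symm⟩

lemma RFd_ge {L : ℝ} (h : ∀ r ∈ RFcand ψ X₀ K N C ε a b, L ≤ r) :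
    L ≤ RFd ψ X₀ K N C ε a b := Finset.le_min' _ _ _ h

end RFaux

section RFprops

variable {G : Type} [Group G] {X : Type} [MetricSpace X] [MulAction G X]
variable {Q : Type} [Group Q] [DecidableEq G] [DecidableEq Q]
variable {ψ : G →* Q} {X₀ : Finset X} {K : Finset G} {N : ℕ} {C ε : ℝ}
variable {a b c : Q × {x // x ∈ X₀}}

lemma RFcand_mem {r : ℝ} (hr : r ∈ RFcand ψ X₀ K N C ε a b) :
    r = C ∨ ∃ n k, n ≤ N ∧ k ∈ K ^ n ∧ ψ k = a.1⁻¹ * b.1 ∧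
      r = dist (a.2 : X) (k • (b.2 : X)) + ε * n := by
  rcases Finset.mem_insert.1 hr with h | h
  · exact Or.inl h
  · obtain ⟨p, hp, hval⟩ := Finset.mem_image.1 h
    obtain ⟨hpr, hk, hψk⟩ := Finset.mem_filter.1 hp
    obtain ⟨hn, -⟩ := Finset.mem_product.1 hpr
    exact Or.inr ⟨p.1, p.2, Nat.lt_succ_iff.1 (Finset.mem_range.1 hn), hk, hψk, hval.symm⟩

lemma RFd_nonneg (hC : 0 ≤ C) (hε : 0 ≤ ε) : 0 ≤ RFd ψ X₀ K N C ε a b := by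
  apply RFd_ge
  intro r hr
  rcases RFcand_mem hr with h | ⟨n, k, _, _, _, h⟩
  · exact h ▸ hC
  · rw [h]; positivity

lemma RFd_self (h1 : (1:G) ∈ K) (hC : 0 ≤ C) (hε : 0 ≤ ε) :
    RFd ψ X₀ K N C ε a a = 0 := by
  refine le_antisymm ?_ (RFd_nonneg hC hε)
  have h := RFd_le (ψ := ψ) (X₀ := X₀) (C := C) (ε := ε) (a := a) (b := a) h1
    (Nat.zero_le N) (k := 1) (by simp [pow_zero]) (by simp)
  simpa using h

lemma RFd_comm (hiso : ∀ (g : G) (x y : X), dist (g • x) (g • y) = dist x y)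
    (h1 : (1:G) ∈ K) (hKinv : K⁻¹ = K) :
    RFd ψ X₀ K N C ε a b = RFd ψ X₀ K N C ε b a := by
  have key : ∀ a b : Q × {x // x ∈ X₀}, RFd ψ X₀ K N C ε a b ≤ RFd ψ X₀ K N C ε b a := by
    intro a b
    rcases RFd_cases (ψ := ψ) (X₀ := X₀) (K := K) (N := N) (C := C) (ε := ε)
        (a := b) (b := a) with h | ⟨n, k, hn, hk, hψk, hval⟩
    · rw [h]; exact RFd_le_C
    · have hk' : k⁻¹ ∈ K ^ n := by
        have : k⁻¹ ∈ (K ^ n)⁻¹ := Finset.inv_mem_inv hk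
        rwa [← inv_pow, hKinv] at this
      have hψk' : ψ k⁻¹ = a.1⁻¹ * b.1 := by
        rw [map_inv, hψk, mul_inv_rev, inv_inv]
      have hle := RFd_le (ψ := ψ) (C := C) (ε := ε) (a := a) (b := b) h1 hn hk' hψk'
      rw [hval]
      refine hle.trans (le_of_eq ?_)
      congr 1
      have h3 := hiso k ((k⁻¹ : G) • (b.2 : X)) (a.2 : X)
      rw [smul_inv_smul] at h3
      rw [dist_comm]
      exact h3.symm
  exact le_antisymm (key a b) (key b a)

lemma RFd_triangle (hiso : ∀ (g : G) (x y : X), dist (g • x) (g • y) = dist x y)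
    (h1 : (1:G) ∈ K) (hC : 0 ≤ C) (hε : 0 ≤ ε) (hCN : C ≤ ε * N) :
    RFd ψ X₀ K N C ε a c ≤ RFd ψ X₀ K N C ε a b + RFd ψ X₀ K N C ε b c := by
  have hnn : ∀ x y : Q × {x // x ∈ X₀}, 0 ≤ RFd ψ X₀ K N C ε x y :=
    fun _ _ => RFd_nonneg hC hε
  rcases RFd_cases (ψ := ψ) (X₀ := X₀) (K := K) (N := N) (C := C) (ε := ε)
      (a := a) (b := b) with h1' | ⟨n₁, k₁, hn₁, hk₁, hψ₁, hv₁⟩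
  · calc RFd ψ X₀ K N C ε a c ≤ C := RFd_le_C
    _ = RFd ψ X₀ K N C ε a b + 0 := by rw [h1', add_zero]
    _ ≤ _ := by gcongr; exact hnn _ _
  rcases RFd_cases (ψ := ψ) (X₀ := X₀) (K := K) (N := N) (C := C) (ε := ε)
      (a := b) (b := c) with h2' | ⟨n₂, k₂, hn₂, hk₂, hψ₂, hv₂⟩
  · calc RFd ψ X₀ K N C ε a c ≤ C := RFd_le_C
    _ = 0 + RFd ψ X₀ K N C ε b c := by rw [h2', zero_add]
    _ ≤ _ := by gcongr; exact hnn _ _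
  rw [hv₁, hv₂]
  by_cases hsum : n₁ + n₂ ≤ N
  · have hk : k₁ * k₂ ∈ K ^ (n₁ + n₂) := by
      rw [pow_add]; exact Finset.mul_mem_mul hk₁ hk₂
    have hψ : ψ (k₁ * k₂) = a.1⁻¹ * c.1 := by
      rw [map_mul, hψ₁, hψ₂, mul_assoc, mul_inv_cancel_left]
    refine (RFd_le h1 hsum hk hψ).trans ?_
    have hd : dist (a.2 : X) ((k₁ * k₂) • (c.2 : X)) ≤
        dist (a.2 : X) (k₁ • (b.2 : X)) + dist (b.2 : X) (k₂ • (c.2 : X)) := by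
      have h2 : dist (k₁ • (b.2 : X)) ((k₁ * k₂) • (c.2 : X)) =
          dist (b.2 : X) (k₂ • (c.2 : X)) := by
        rw [mul_smul]; exact hiso k₁ _ _
      calc dist (a.2 : X) ((k₁ * k₂) • (c.2 : X))
          ≤ dist (a.2 : X) (k₁ • (b.2 : X)) + dist (k₁ • (b.2 : X)) ((k₁ * k₂) • (c.2 : X)) :=
            dist_triangle _ _ _
        _ = _ := by rw [h2]
    push_cast
    linarith
  · have hge : ε * N ≤ ε * n₁ + ε * n₂ := by
      have : (N : ℝ) ≤ (n₁ : ℝ) + n₂ := by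
        exact_mod_cast (Nat.lt_of_not_le hsum).le
      nlinarith
    have := RFd_le_C (ψ := ψ) (X₀ := X₀) (K := K) (N := N) (C := C) (ε := ε)
      (a := a) (b := c)
    have d1 : (0:ℝ) ≤ dist (a.2 : X) (k₁ • (b.2 : X)) := dist_nonneg
    have d2 : (0:ℝ) ≤ dist (b.2 : X) (k₂ • (c.2 : X)) := dist_nonneg
    linarith

lemma RFd_eq_zero (hC : 1 ≤ C) (hε : 0 < ε)
    (h : RFd ψ X₀ K N C ε a b = 0) : a = b := by
  rcases RFd_cases (ψ := ψ) (X₀ := X₀) (K := K) (N := N) (C := C) (ε := ε)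
      (a := a) (b := b) with h' | ⟨n, k, hn, hk, hψk, hval⟩
  · rw [h] at h'; linarith
  · rw [h] at hval
    have hd : (0:ℝ) ≤ dist (a.2 : X) (k • (b.2 : X)) := dist_nonneg
    have hen : (0:ℝ) ≤ ε * n := by positivity
    have hn0 : (n : ℝ) = 0 := by
      by_contra hn0
      have : (0:ℝ) < n := lt_of_le_of_ne (Nat.cast_nonneg n) (Ne.symm hn0)
      nlinarith
    have hnz : n = 0 := by exact_mod_cast hn0
    subst hnz
    rw [pow_zero, Finset.mem_one] at hk
    subst hk
    have hq : a.1 = b.1 := by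
      have h1q : a.1⁻¹ * b.1 = 1 := by rw [← hψk, map_one]
      exact inv_mul_eq_one.1 h1q
    have hx : (a.2 : X) = (b.2 : X) := by
      have hd2 : (0:ℝ) ≤ dist (a.2 : X) (b.2 : X) := dist_nonneg
      have : dist (a.2 : X) (b.2 : X) = 0 := by
        rw [one_smul] at hval
        push_cast at hval
        linarith
      exact dist_eq_zero.1 this
    exact Prod.ext hq (Subtype.ext hx)

lemma RFcand_smul (q : Q) :
    RFcand ψ X₀ K N C ε (q * a.1, a.2) (q * b.1, b.2) = RFcand ψ X₀ K N C ε a b := by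
  have hq : (q * a.1)⁻¹ * (q * b.1) = a.1⁻¹ * b.1 := by
    rw [mul_inv_rev, mul_assoc, inv_mul_cancel_left]
  simp only [RFcand, hq]

end RFprops

section RFsmul
variable {G : Type} [Group G] {X : Type} [MetricSpace X] [MulAction G X]
variable {Q : Type} [Group Q] [DecidableEq G] [DecidableEq Q]
variable {ψ : G →* Q} {X₀ : Finset X} {K : Finset G} {N : ℕ} {C ε : ℝ}
variable {a b : Q × {x // x ∈ X₀}}

lemma RFd_smul (q : Q) :
    RFd ψ X₀ K N C ε (q * a.1, a.2) (q * b.1, b.2) = RFd ψ X₀ K N C ε a b := by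
  simp only [RFd]
  congr 1
  exact RFcand_smul q
end RFsmul

lemma RFsep {G : Type} [Group G]
    (hRF : ∀ g : G, g ≠ 1 → ∃ (Q : Type) (_ : Group Q) (_ : Fintype Q) (ψ : G →* Q), ψ g ≠ 1)
    (S : Finset G) :
    ∃ (Q : Type) (_ : Group Q) (_ : Fintype Q) (ψ : G →* Q),
      ∀ s ∈ S, ∀ u ∈ S, ψ s = ψ u → s = u := by
  classical
  set T : Finset G := (S * S⁻¹).erase 1 with hT
  have hTne : ∀ t : {g : G // g ∈ T}, (t : G) ≠ 1 := fun t => Finset.ne_of_mem_erase t.2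
  choose Q hQg hQf ψ hψ using fun t : {g : G // g ∈ T} => hRF t (hTne t)
  letI : ∀ t, Group (Q t) := hQg
  letI : ∀ t, Fintype (Q t) := hQf
  refine ⟨∀ t : {g : G // g ∈ T}, Q t, inferInstance, inferInstance,
    { toFun := fun g t => ψ t g
      map_one' := funext fun t => (ψ t).map_one
      map_mul' := fun a b => funext fun t => (ψ t).map_mul a b }, ?_⟩
  intro s hs u hu hsu
  by_contra hne
  have hmem : s * u⁻¹ ∈ T := by
    refine Finset.mem_erase.2 ⟨?_, Finset.mul_mem_mul hs (Finset.inv_mem_inv hu)⟩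
    simpa [mul_inv_eq_one] using hne
  have h1 : ψ ⟨s * u⁻¹, hmem⟩ (s * u⁻¹) ≠ 1 := hψ _
  apply h1
  have h2 : ψ ⟨s * u⁻¹, hmem⟩ s = ψ ⟨s * u⁻¹, hmem⟩ u := congrFun hsu ⟨s * u⁻¹, hmem⟩
  rw [map_mul, map_inv, h2, mul_inv_cancel]

/-- **Theorem (main result).** Let `G` be a residually finite group acting by isometries on a
metric space `X`. Then for every finite `X₀ ⊆ X`, finite `A ⊆ G` and `ε > 0`, there exist a
finite metric space `Y` with an isometric `G`-action and a map `f : X₀ → Y` such that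
`|d(g•x, h•y) - η(g•f x, h•f y)| ≤ ε` for all `g, h ∈ A` and `x, y ∈ X₀`. -/
theorem residually_finite_local_finite_models
    {G : Type} [Group G]
    (hRF : ∀ g : G, g ≠ 1 → ∃ (Q : Type) (_ : Group Q) (_ : Fintype Q) (ψ : G →* Q), ψ g ≠ 1)
    {X : Type} [MetricSpace X] [MulAction G X]
    (hiso : ∀ (g : G) (x y : X), dist (g • x) (g • y) = dist x y)
    (X₀ : Finset X) (A : Finset G) (ε : ℝ) (hε : 0 < ε) :
    ∃ (Y : Type) (_ : MetricSpace Y) (_ : Fintype Y) (_ : MulAction G Y),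
      (∀ (g : G) (a b : Y), dist (g • a) (g • b) = dist a b) ∧
      ∃ f : X₀ → Y, ∀ g ∈ A, ∀ h ∈ A, ∀ x : X₀, ∀ y : X₀,
        |dist (g • (x : X)) (h • (y : X)) - dist (g • f x) (h • f y)| ≤ ε := by
  classical
  -- constants
  set M : ℝ := ∑ g ∈ A, ∑ h ∈ A, ∑ x ∈ X₀, ∑ y ∈ X₀, dist (g • x) (h • y) with hMdef
  have hM0 : ∀ g ∈ A, ∀ h ∈ A, ∀ x ∈ X₀, ∀ y ∈ X₀, dist (g • x) (h • y) ≤ M := by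
    intro g hg h hh x hx y hy
    calc dist (g • x) (h • y) ≤ ∑ y ∈ X₀, dist (g • x) (h • y) :=
          Finset.single_le_sum (f := fun y => dist (g • x) (h • y))
            (fun _ _ => dist_nonneg) hy
    _ ≤ ∑ x ∈ X₀, ∑ y ∈ X₀, dist (g • x) (h • y) :=
          Finset.single_le_sum (f := fun x => ∑ y ∈ X₀, dist (g • x) (h • y))
            (fun _ _ => Finset.sum_nonneg fun _ _ => dist_nonneg) hx
    _ ≤ ∑ h ∈ A, ∑ x ∈ X₀, ∑ y ∈ X₀, dist (g • x) (h • y) :=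
          Finset.single_le_sum (f := fun h => ∑ x ∈ X₀, ∑ y ∈ X₀, dist (g • x) (h • y))
            (fun _ _ => Finset.sum_nonneg fun _ _ =>
            Finset.sum_nonneg fun _ _ => dist_nonneg) hh
    _ ≤ M := Finset.single_le_sum
            (f := fun g => ∑ h ∈ A, ∑ x ∈ X₀, ∑ y ∈ X₀, dist (g • x) (h • y))
            (fun _ _ => Finset.sum_nonneg fun _ _ =>
            Finset.sum_nonneg fun _ _ => Finset.sum_nonneg fun _ _ => dist_nonneg) hg
  have hMnn : 0 ≤ M := by positivity
  set C : ℝ := M + 1 with hCdef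
  have hC1 : 1 ≤ C := by simp [hCdef]; linarith
  have hC0 : 0 ≤ C := by linarith
  set N : ℕ := max 1 ⌈C / ε⌉₊ with hNdef
  have hN1 : 1 ≤ N := le_max_left _ _
  have hCN : C ≤ ε * N := by
    have h1 : C / ε ≤ (⌈C / ε⌉₊ : ℝ) := Nat.le_ceil _
    have h2 : (⌈C / ε⌉₊ : ℝ) ≤ (N : ℝ) := by exact_mod_cast le_max_right 1 ⌈C / ε⌉₊
    have := (div_le_iff₀ hε).1 (h1.trans h2)
    linarith
  -- the finite set K
  set K : Finset G := insert (1 : G) (A⁻¹ * A) with hKdef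
  have h1K : (1 : G) ∈ K := Finset.mem_insert_self _ _
  have hKinv : K⁻¹ = K := by
    have hAA : (A⁻¹ * A)⁻¹ = A⁻¹ * A := by rw [mul_inv_rev, inv_inv]
    ext k
    simp only [hKdef, Finset.mem_inv', Finset.mem_insert, inv_eq_one]
    constructor
    · rintro (h | h)
      · exact Or.inl h
      · exact Or.inr (by rwa [← hAA, Finset.mem_inv', inv_inv] at h)
    · rintro (h | h)
      · exact Or.inl h
      · exact Or.inr (by rw [← hAA, Finset.mem_inv', inv_inv]; exact h)
  -- the finite quotient
  obtain ⟨Q, hQg, hQf, ψ, hinj⟩ := RFsep hRF (K ^ N)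
  letI : Group Q := hQg
  letI : Fintype Q := hQf
  -- the finite model
  letI act : MulAction G (Q × {x // x ∈ X₀}) :=
    { smul := fun g p => (ψ g * p.1, p.2)
      one_smul := fun p => by cases p; simp [HSMul.hSMul, SMul.smul]
      mul_smul := fun g h p => by cases p; simp [HSMul.hSMul, SMul.smul, mul_assoc] }
  letI pm : PseudoMetricSpace (Q × {x // x ∈ X₀}) :=
    { dist := RFd ψ X₀ K N C ε
      dist_self := fun a => RFd_self h1K hC0 hε.le
      dist_comm := fun a b => RFd_comm hiso h1K hKinv
      dist_triangle := fun a b c => RFd_triangle hiso h1K hC0 hε.le hCN }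
  letI m : MetricSpace (Q × {x // x ∈ X₀}) :=
    { toPseudoMetricSpace := pm
      eq_of_dist_eq_zero := fun h => RFd_eq_zero hC1 hε h }
  refine ⟨Q × {x // x ∈ X₀}, m, inferInstance, act, ?_, ?_⟩
  · intro g a b
    rcases a with ⟨qa, xa⟩
    rcases b with ⟨qb, xb⟩
    show RFd ψ X₀ K N C ε (ψ g * qa, xa) (ψ g * qb, xb) = RFd ψ X₀ K N C ε (qa, xa) (qb, xb)
    exact RFd_smul (a := (qa, xa)) (b := (qb, xb)) (ψ g)
  · refine ⟨fun x => ((1 : Q), x), ?_⟩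
    intro g hg h hh x y
    have hdist : dist (g • ((1 : Q), x)) (h • ((1 : Q), y)) =
        RFd ψ X₀ K N C ε (ψ g * 1, x) (ψ h * 1, y) := rfl
    have hfirst : ((ψ g * 1 : Q), x).1⁻¹ * ((ψ h * 1 : Q), y).1 = ψ (g⁻¹ * h) := by
      simp [map_mul]
    have hkK : g⁻¹ * h ∈ K := by
      apply Finset.mem_insert_of_mem
      exact Finset.mul_mem_mul (Finset.inv_mem_inv hg) hh
    have hkKN : g⁻¹ * h ∈ K ^ N := by
      have : g⁻¹ * h ∈ K ^ 1 := by rwa [pow_one]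
      exact Finset.pow_subset_pow_right h1K hN1 this
    have hpt : dist ((x : X)) ((g⁻¹ * h) • (y : X)) = dist (g • (x : X)) (h • (y : X)) := by
      have := hiso g (x : X) ((g⁻¹ * h) • (y : X))
      rw [← mul_smul, mul_inv_cancel_left] at this
      exact this.symm
    -- upper bound
    have hub : RFd ψ X₀ K N C ε (ψ g * 1, x) (ψ h * 1, y) ≤
        dist (g • (x : X)) (h • (y : X)) + ε := by
      have hle := RFd_le (ψ := ψ) (X₀ := X₀) (C := C) (ε := ε)
        (a := ((ψ g * 1 : Q), x)) (b := ((ψ h * 1 : Q), y)) h1K hN1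
        (k := g⁻¹ * h) (by rwa [pow_one]) (by rw [hfirst])
      rw [hpt] at hle
      simpa using hle
    -- lower bound
    have hlb : dist (g • (x : X)) (h • (y : X)) ≤
        RFd ψ X₀ K N C ε (ψ g * 1, x) (ψ h * 1, y) := by
      apply RFd_ge
      intro r hr
      rcases RFcand_mem hr with hrC | ⟨n, k, hn, hk, hψk, hrv⟩
      · rw [hrC, hCdef]
        have := hM0 g hg h hh x x.2 y y.2
        linarith
      · rw [hfirst] at hψk
        have hkN : k ∈ K ^ N := Finset.pow_subset_pow_right h1K hn hk
        have hkeq : k = g⁻¹ * h := hinj k hkN (g⁻¹ * h) hkKN hψk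
        subst hkeq
        rw [hrv]
        have hεn : (0:ℝ) ≤ ε * n := by positivity
        have : dist ((x : X)) ((g⁻¹ * h) • ((y : X))) = dist (g • (x : X)) (h • (y : X)) := hpt
        simp only [this]
        linarith
    rw [hdist, abs_le]
    constructor <;> linarith
end

section
/- Let G be a residually finite group and let s : G → [0,∞) be a seminorm on G. Then for every finite subset A ⊆ G and every ε > 0 there exist a finite group H, a norm ρ on H, and a surjective group homomorphism φ : G → H such that |ρ(φ(g)) − s(g)| ≤ ε for all g ∈ A. -/
open scoped Pointwise

private def ballSet {G : Type} [Group G] [DecidableEq G] (S : Finset G) : ℕ → Finset G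
  | 0 => {1}
  | n + 1 => ballSet S n ∪ S * ballSet S n

private lemma prod_mem_ballSet {G : Type} [Group G] [DecidableEq G] (S : Finset G) :
    ∀ (n : ℕ) (w : List G), w.length ≤ n → (∀ b ∈ w, b ∈ S) → w.prod ∈ ballSet S n := by
  intro n
  induction n with
  | zero =>
    intro w hw _
    have : w = [] := List.eq_nil_of_length_eq_zero (Nat.le_zero.1 hw)
    subst this; simp [ballSet]
  | succ n ih =>
    intro w hw hb
    match w with
    | [] =>
      have h1 : (1 : G) ∈ ballSet S n := by
        simpa using ih [] (Nat.zero_le n) (by simp)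
      simp only [List.prod_nil, ballSet, Finset.mem_union]
      exact Or.inl h1
    | b :: t =>
      have ht : t.prod ∈ ballSet S n :=
        ih t (Nat.le_of_succ_le_succ hw) (fun x hx => hb x (List.mem_cons_of_mem _ hx))
      have hbS : b ∈ S := hb b List.mem_cons_self
      simp only [List.prod_cons, ballSet, Finset.mem_union]
      exact Or.inr (Finset.mul_mem_mul hbS ht)

private lemma seminorm_list_prod_le {G : Type} [Group G] (s : G → ℝ) (hs_one : s 1 = 0)
    (hs_mul : ∀ g h, s (g * h) ≤ s g + s h) :
    ∀ w : List G, s w.prod ≤ (w.map s).sum := by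
  intro w
  induction w with
  | nil => simp [hs_one]
  | cons b t ih =>
    simp only [List.prod_cons, List.map_cons, List.sum_cons]
    exact le_trans (hs_mul b t.prod) (by linarith)

/-- **Corollary.** Let `G` be a residually finite group and `s` a seminorm on `G`. Then for
every finite `A ⊆ G` and `ε > 0` there exist a finite normed group `(H, ρ)` and a surjective
homomorphism `φ : G → H` with `|ρ(φ g) - s g| ≤ ε` for all `g ∈ A`. -/
theorem residually_finite_seminorm_approx
    {G : Type} [Group G]
    (hRF : ∀ g : G, g ≠ 1 → ∃ (Q : Type) (_ : Group Q) (_ : Fintype Q) (ψ : G →* Q), ψ g ≠ 1)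
    (s : G → ℝ)
    (hs_nonneg : ∀ g, 0 ≤ s g) (hs_one : s 1 = 0)
    (hs_inv : ∀ g, s g⁻¹ = s g) (hs_mul : ∀ g h, s (g * h) ≤ s g + s h)
    (A : Finset G) (ε : ℝ) (hε : 0 < ε) :
    ∃ (H : Type) (_ : Group H) (_ : Fintype H) (ρ : H → ℝ),
      (∀ a, 0 ≤ ρ a) ∧ ρ 1 = 0 ∧ (∀ a, ρ a⁻¹ = ρ a) ∧
      (∀ a b, ρ (a * b) ≤ ρ a + ρ b) ∧ (∀ a, ρ a = 0 → a = 1) ∧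
      ∃ φ : G →* H, Function.Surjective φ ∧ ∀ g ∈ A, |ρ (φ g) - s g| ≤ ε := by
  classical
  -- constants
  set M : ℝ := ε + ∑ a ∈ A, s a with hMdef
  have hsum0 : 0 ≤ ∑ a ∈ A, s a := Finset.sum_nonneg (fun a _ => hs_nonneg a)
  have hMε : ε ≤ M := by simp [hMdef]; linarith
  have hM0 : 0 < M := lt_of_lt_of_le hε hMε
  set L : ℕ := ⌈M / ε⌉₊ with hLdef
  have hL : M ≤ (L : ℝ) * ε := by
    have := Nat.le_ceil (M / ε)
    rw [div_le_iff₀ hε] at this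
    exact this
  have hL1 : 1 ≤ L := by
    rw [hLdef, Nat.one_le_ceil_iff]
    positivity
  -- alphabet and the finite set to separate
  set S₀ : Finset G := A ∪ A.image (·⁻¹) with hS₀def
  have hS₀A : ∀ a ∈ A, a ∈ S₀ := fun a ha => Finset.mem_union_left _ ha
  have hS₀inv : ∀ b ∈ S₀, b⁻¹ ∈ S₀ := by
    intro b hb
    rcases Finset.mem_union.1 hb with h | h
    · exact Finset.mem_union_right _ (Finset.mem_image_of_mem _ h)
    · rcases Finset.mem_image.1 h with ⟨a, ha, rfl⟩
      simpa using hS₀A a ha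
  set K : Finset G := (A.image (·⁻¹)) * ballSet S₀ L with hKdef
  set T : Finset G := K.filter (· ≠ (1 : G)) with hTdef
  -- separating homomorphisms
  have hsep : ∀ t : {x // x ∈ T}, ∃ (Q : Type) (_ : Group Q) (_ : Fintype Q) (ψ : G →* Q),
      ψ t.1 ≠ 1 := by
    intro t
    have := Finset.mem_filter.1 t.2
    exact hRF t.1 this.2
  choose Q gQ fQ ψQ hψ using hsep
  letI : ∀ t, Group (Q t) := gQ
  letI : ∀ t, Fintype (Q t) := fQ
  let ψbig : G →* ∀ t : {x // x ∈ T}, Q t :=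
    { toFun := fun g t => ψQ t g
      map_one' := by funext t; simp
      map_mul' := by intro x y; funext t; simp }
  haveI : Fintype ψbig.range := Fintype.ofFinite _
  let φ : G →* ψbig.range := ψbig.rangeRestrict
  have hφsurj : Function.Surjective φ := ψbig.rangeRestrict_surjective
  have hker : ∀ g ∈ K, φ g = 1 → g = 1 := by
    intro g hg hfg
    by_contra hne1
    have ht : g ∈ T := Finset.mem_filter.2 ⟨hg, hne1⟩
    have h1 : ψbig g = 1 := by
      have h := congrArg Subtype.val hfg
      rwa [MonoidHom.coe_rangeRestrict, OneMemClass.coe_one] at h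
    have h2 : ψQ ⟨g, ht⟩ g = 1 := congrFun h1 ⟨g, ht⟩
    exact hψ ⟨g, ht⟩ h2
  -- cost of words
  set cost : List G → ℝ := fun w => (w.map (fun b => s b + ε)).sum with hcostdef
  have cost_eq : ∀ w : List G, cost w = (w.map s).sum + w.length * ε := by
    intro w
    induction w with
    | nil => simp [hcostdef]
    | cons b t ih =>
      simp only [hcostdef, List.map_cons, List.sum_cons, List.length_cons] at ih ⊢
      push_cast
      linarith
  have cost_len : ∀ w : List G, (w.length : ℝ) * ε ≤ cost w := by
    intro w
    rw [cost_eq w]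
    have : 0 ≤ (w.map s).sum :=
      List.sum_nonneg (by intro x hx; rcases List.mem_map.1 hx with ⟨b, _, rfl⟩; exact hs_nonneg b)
    linarith
  have cost_nonneg : ∀ w : List G, 0 ≤ cost w := by
    intro w
    have := cost_len w
    have h0 : (0:ℝ) ≤ (w.length : ℝ) * ε := by positivity
    linarith
  have cost_ge : ∀ w : List G, s w.prod ≤ cost w := by
    intro w
    rw [cost_eq w]
    have := seminorm_list_prod_le s hs_one hs_mul w
    have h0 : (0:ℝ) ≤ (w.length : ℝ) * ε := by positivity
    linarith
  -- the norm on the quotient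
  set Word : List G → Prop := fun w => w.length ≤ L ∧ ∀ b ∈ w, b ∈ S₀ with hWorddef
  set Sset : ψbig.range → Set ℝ :=
    fun h => insert M {x | ∃ w, Word w ∧ φ w.prod = h ∧ cost w = x} with hSsetdef
  set ρ : ψbig.range → ℝ := fun h => sInf (Sset h) with hρdef
  have hmemM : ∀ h, M ∈ Sset h := fun h => Set.mem_insert _ _
  have hSne : ∀ h, (Sset h).Nonempty := fun h => ⟨M, hmemM h⟩
  have hlb0 : ∀ h, ∀ x ∈ Sset h, (0:ℝ) ≤ x := by
    intro h x hx
    rcases hx with rfl | ⟨w, _, _, rfl⟩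
    · exact hM0.le
    · exact cost_nonneg w
  have hbdd : ∀ h, BddBelow (Sset h) := fun h => ⟨0, fun x hx => hlb0 h x hx⟩
  have hρM : ∀ h, ρ h ≤ M := fun h => csInf_le (hbdd h) (hmemM h)
  have hρ_nonneg : ∀ h, 0 ≤ ρ h := fun h => le_csInf (hSne h) (hlb0 h)
  -- ρ 1 = 0
  have hρ_one : ρ 1 = 0 := by
    have h0 : (0:ℝ) ∈ Sset 1 := by
      refine Set.mem_insert_of_mem _ ⟨[], ⟨by simp, by simp⟩, by simp, by simp [hcostdef]⟩
    exact le_antisymm (csInf_le (hbdd 1) h0) (hρ_nonneg 1)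
  -- symmetry
  have hsub : ∀ h, Sset h ⊆ Sset h⁻¹ := by
    intro h x hx
    rcases hx with rfl | ⟨w, ⟨hlw, hbw⟩, hpw, rfl⟩
    · exact hmemM _
    · refine Set.mem_insert_of_mem _ ⟨(w.map (·⁻¹)).reverse, ⟨by simpa using hlw, ?_⟩, ?_, ?_⟩
      · intro b hb
        rw [List.mem_reverse] at hb
        rcases List.mem_map.1 hb with ⟨c, hc, rfl⟩
        exact hS₀inv c (hbw c hc)
      · rw [← List.prod_inv_reverse]
        rw [map_inv, hpw]
      · simp only [hcostdef, List.sum_reverse, List.map_reverse, List.map_map]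
        congr 1
        apply List.map_congr_left
        intro b _
        simp [hs_inv]
  have hSeq : ∀ h, Sset h⁻¹ = Sset h := by
    intro h
    apply Set.Subset.antisymm
    · have := hsub h⁻¹
      simpa using this
    · exact hsub h
  have hρ_inv : ∀ h, ρ h⁻¹ = ρ h := by
    intro h
    simp only [hρdef, hSeq]
  -- triangle inequality
  have key : ∀ a b : ψbig.range, ∀ x ∈ Sset a, ∀ y ∈ Sset b, ρ (a * b) ≤ x + y := by
    intro a b x hx y hy
    rcases hx with rfl | ⟨w, ⟨hlw, hbw⟩, hpw, rfl⟩
    · have := hlb0 b y hy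
      linarith [hρM (a * b)]
    rcases hy with rfl | ⟨v, ⟨hlv, hbv⟩, hpv, rfl⟩
    · have := cost_nonneg w
      linarith [hρM (a * b)]
    by_cases hlen : w.length + v.length ≤ L
    · have hmem : cost w + cost v ∈ Sset (a * b) := by
        refine Set.mem_insert_of_mem _ ⟨w ++ v, ⟨by simpa using hlen, ?_⟩, ?_, ?_⟩
        · intro b hb
          rcases List.mem_append.1 hb with h | h
          exacts [hbw b h, hbv b h]
        · rw [List.prod_append, map_mul, hpw, hpv]
        · simp only [hcostdef, List.map_append, List.sum_append]
      exact csInf_le (hbdd _) hmem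
    · have h1 : (L : ℝ) + 1 ≤ (w.length : ℝ) + v.length := by
        push_neg at hlen
        exact_mod_cast Nat.succ_le_of_lt hlen
      have h2 : M ≤ cost w + cost v := by
        have hw := cost_len w
        have hv := cost_len v
        nlinarith [hε.le]
      linarith [hρM (a * b)]
  have hρ_mul : ∀ a b : ψbig.range, ρ (a * b) ≤ ρ a + ρ b := by
    intro a b
    refine le_of_forall_pos_le_add ?_
    intro δ hδ
    have hx := exists_lt_of_csInf_lt (hSne a) (lt_add_of_pos_right (sInf (Sset a)) (half_pos hδ))
    have hy := exists_lt_of_csInf_lt (hSne b) (lt_add_of_pos_right (sInf (Sset b)) (half_pos hδ))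
    obtain ⟨x, hxmem, hxlt⟩ := hx
    obtain ⟨y, hymem, hylt⟩ := hy
    have := key a b x hxmem y hymem
    have hρa : ρ a = sInf (Sset a) := rfl
    have hρb : ρ b = sInf (Sset b) := rfl
    rw [hρa, hρb]
    linarith
  -- norm property
  have hρ_norm : ∀ a : ψbig.range, ρ a = 0 → a = 1 := by
    intro a ha
    by_contra hne1
    have hlow : min ε M ≤ ρ a := by
      apply le_csInf (hSne a)
      rintro x (rfl | ⟨w, ⟨hlw, hbw⟩, hpw, rfl⟩)
      · exact min_le_right _ _
      · have hw : w ≠ [] := by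
          rintro rfl
          simp only [List.prod_nil, map_one] at hpw
          exact hne1 hpw.symm
        have h1 : 1 ≤ w.length := List.length_pos_iff.2 hw
        have h1' : (1:ℝ) ≤ (w.length : ℝ) := by exact_mod_cast h1
        have := cost_len w
        have : ε ≤ cost w := by nlinarith [hε.le]
        exact le_trans (min_le_left _ _) this
    have : 0 < min ε M := lt_min hε hM0
    linarith
  -- the estimates on A
  refine ⟨ψbig.range, inferInstance, inferInstance, ρ, hρ_nonneg, hρ_one, hρ_inv, hρ_mul,
    hρ_norm, φ, hφsurj, ?_⟩
  intro g hg
  have hub : ρ (φ g) ≤ s g + ε := by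
    apply csInf_le (hbdd _)
    refine Set.mem_insert_of_mem _ ⟨[g], ⟨by simpa using hL1, by simpa using hS₀A g hg⟩,
      by simp, by simp [hcostdef]⟩
  have hlb : s g ≤ ρ (φ g) := by
    apply le_csInf (hSne _)
    rintro x (rfl | ⟨w, ⟨hlw, hbw⟩, hpw, rfl⟩)
    · have : s g ≤ ∑ a ∈ A, s a := Finset.single_le_sum (fun a _ => hs_nonneg a) hg
      simp only [hMdef]
      linarith
    · have hkmem : g⁻¹ * w.prod ∈ K := by
        rw [hKdef]
        exact Finset.mul_mem_mul (Finset.mem_image_of_mem _ hg)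
          (prod_mem_ballSet S₀ L w hlw hbw)
      have hφk : φ (g⁻¹ * w.prod) = 1 := by
        rw [map_mul, map_inv, hpw]
        simp
      have := hker _ hkmem hφk
      have hprod : w.prod = g := by
        rw [inv_mul_eq_one] at this
        exact this.symm
      calc s g = s w.prod := by rw [hprod]
        _ ≤ cost w := cost_ge w
  rw [abs_le]
  constructor <;> linarith
end

section
/- Let F be a free group, G any group, and π : F → G a surjective group homomorphism. Equip G with the 0-1 metric δ (δ(x,y) = 0 if x = y and δ(x,y) = 1 otherwise) and let F × F act on G by (g,h)·x = π(g) x π(h)⁻¹; this action is by isometries. Then for every finite subset X₀ ⊆ G, every finite subset A ⊆ F × F and every ε > 0, there exist a finite metric space (Y,η), an action of F × F on Y by isometries, and a map f : X₀ → Y such that |δ((g,h)·x, (g',h')·y) − η((g,h)·f(x), (g',h')·f(y))| ≤ ε for all (g,h), (g',h') ∈ A and x, y ∈ X₀. -/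
open Finset in
private lemma freeGroup_finite_quotient_injOn {α : Type} (V : Finset (FreeGroup α)) :
    ∃ (Q : Type) (_ : Group Q) (_ : Fintype Q) (φ : FreeGroup α →* Q),
      Set.InjOn φ (V : Set (FreeGroup α)) := by
  classical
  set W : Finset (FreeGroup α) :=
    insert 1 ((V.biUnion fun u => u.toWord.tails.toFinset).image FreeGroup.mk) with hWdef
  have h1W : (1 : FreeGroup α) ∈ W := Finset.mem_insert_self _ _
  have htail : ∀ u ∈ V, ∀ L : List (α × Bool), L <:+ u.toWord → FreeGroup.mk L ∈ W := by
    intro u hu L hL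
    exact Finset.mem_insert_of_mem (Finset.mem_image_of_mem _
      (Finset.mem_biUnion.2 ⟨u, hu, List.mem_toFinset.2 ((List.mem_tails _ _).2 hL)⟩))
  let Y := {x // x ∈ W}
  letI : Fintype Y := FinsetCoe.fintype W
  let e : (a : α) → ({x : Y // (FreeGroup.of a * ↑x : FreeGroup α) ∈ W} ≃
      {y : Y // ((FreeGroup.of a)⁻¹ * ↑y : FreeGroup α) ∈ W}) := fun a =>
    { toFun := fun x => ⟨⟨FreeGroup.of a * ↑x.1, x.2⟩, by
        simp only [inv_mul_cancel_left]; exact x.1.2⟩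
      invFun := fun y => ⟨⟨(FreeGroup.of a)⁻¹ * ↑y.1, y.2⟩, by
        simp only [mul_inv_cancel_left]; exact y.1.2⟩
      left_inv := fun x => by
        ext; simp
      right_inv := fun y => by
        ext; simp }
  let σ : α → Equiv.Perm Y := fun a => (e a).extendSubtype
  let φ : FreeGroup α →* Equiv.Perm Y := FreeGroup.lift σ
  have hσ : ∀ (a : α) (z : Y) (hz : (FreeGroup.of a * ↑z : FreeGroup α) ∈ W),
      ((σ a z : Y) : FreeGroup α) = FreeGroup.of a * ↑z := by
    intro a z hz
    rw [Equiv.extendSubtype_apply_of_mem (e a) z hz]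
    rfl
  have hσinv : ∀ (a : α) (z : Y) (_ : ((FreeGroup.of a)⁻¹ * ↑z : FreeGroup α) ∈ W),
      (((σ a)⁻¹ z : Y) : FreeGroup α) = (FreeGroup.of a)⁻¹ * ↑z := by
    intro a z hz
    have hmem : (FreeGroup.of a * ((FreeGroup.of a)⁻¹ * ↑z) : FreeGroup α) ∈ W := by
      rw [mul_inv_cancel_left]; exact z.2
    have h1 : σ a ⟨(FreeGroup.of a)⁻¹ * ↑z, hz⟩ = z := by
      apply Subtype.ext
      rw [hσ a ⟨(FreeGroup.of a)⁻¹ * ↑z, hz⟩ hmem]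
      simp
    calc (((σ a)⁻¹ z : Y) : FreeGroup α)
        = (((σ a)⁻¹ (σ a ⟨(FreeGroup.of a)⁻¹ * ↑z, hz⟩) : Y) : FreeGroup α) := by rw [h1]
      _ = (FreeGroup.of a)⁻¹ * ↑z := by rw [Equiv.Perm.inv_def, Equiv.symm_apply_apply]
  have hsingleF : ∀ a : α, FreeGroup.mk [(a, false)] = (FreeGroup.of a)⁻¹ := by
    intro a
    rw [show (FreeGroup.of a)⁻¹ = (FreeGroup.mk [(a, true)])⁻¹ from rfl, FreeGroup.inv_mk]
    simp [FreeGroup.invRev]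
  have hconsT : ∀ (a : α) (L : List (α × Bool)),
      FreeGroup.mk ((a, true) :: L) = FreeGroup.of a * FreeGroup.mk L := by
    intro a L
    rw [show FreeGroup.of a = FreeGroup.mk [(a, true)] from rfl, FreeGroup.mul_mk]
    rfl
  have hconsF : ∀ (a : α) (L : List (α × Bool)),
      FreeGroup.mk ((a, false) :: L) = (FreeGroup.of a)⁻¹ * FreeGroup.mk L := by
    intro a L
    rw [← hsingleF a, FreeGroup.mul_mk]
    rfl
  have hφT : ∀ a : α, φ (FreeGroup.mk [(a, true)]) = σ a := fun a => FreeGroup.lift_apply_of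
  have hφF : ∀ a : α, φ (FreeGroup.mk [(a, false)]) = (σ a)⁻¹ := by
    intro a
    rw [hsingleF a, map_inv]
    exact congrArg Inv.inv (hφT a)
  have key : ∀ u ∈ V, ∀ (L₂ L₁ : List (α × Bool)), u.toWord = L₁ ++ L₂ →
      ((φ (FreeGroup.mk L₂) ⟨1, h1W⟩ : Y) : FreeGroup α) = FreeGroup.mk L₂ := by
    intro u hu L₂
    induction L₂ with
    | nil =>
      intro L₁ h
      rw [← FreeGroup.one_eq_mk, map_one]
      rfl
    | cons x L₂ ih =>
      intro L₁ h
      obtain ⟨a, b⟩ := x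
      have hL₂suf : u.toWord = (L₁ ++ [(a, b)]) ++ L₂ := by simp [h]
      have ihv := ih (L₁ ++ [(a, b)]) hL₂suf
      have hmemC : FreeGroup.mk ((a, b) :: L₂) ∈ W := htail u hu _ ⟨L₁, h.symm⟩
      have hsplit : FreeGroup.mk ((a, b) :: L₂) = FreeGroup.mk [(a, b)] * FreeGroup.mk L₂ := by
        rw [FreeGroup.mul_mk, List.singleton_append]
      rw [hsplit, map_mul, Equiv.Perm.mul_apply]
      set ptL : Y := φ (FreeGroup.mk L₂) ⟨1, h1W⟩ with hptL
      cases b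
      · have hz : ((FreeGroup.of a)⁻¹ * (↑ptL) : FreeGroup α) ∈ W := by
          rw [ihv, ← hconsF]; exact hmemC
        rw [hφF a, hσinv a ptL hz, ihv, ← hconsF, ← hsplit]
      · have hz : (FreeGroup.of a * (↑ptL) : FreeGroup α) ∈ W := by
          rw [ihv, ← hconsT]; exact hmemC
        rw [hφT a, hσ a ptL hz, ihv, ← hconsT, ← hsplit]
  refine ⟨Equiv.Perm Y, inferInstance, inferInstance, φ, ?_⟩
  intro u hu v hv huv
  have h1 := key u hu u.toWord [] (by simp)
  have h2 := key v hv v.toWord [] (by simp)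
  rw [FreeGroup.mk_toWord] at h1 h2
  rw [huv, h2] at h1
  exact h1.symm

private lemma prodFree_finite_quotient_injOn {α : Type}
    (V : Finset (FreeGroup α × FreeGroup α)) :
    ∃ (Q : Type) (_ : Group Q) (_ : Fintype Q) (φ : FreeGroup α × FreeGroup α →* Q),
      Set.InjOn φ (V : Set (FreeGroup α × FreeGroup α)) := by
  classical
  obtain ⟨Q₁, hg₁, hf₁, φ₁, h₁⟩ := freeGroup_finite_quotient_injOn (V.image Prod.fst)
  obtain ⟨Q₂, hg₂, hf₂, φ₂, h₂⟩ := freeGroup_finite_quotient_injOn (V.image Prod.snd)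
  letI := hg₁; letI := hf₁; letI := hg₂; letI := hf₂
  refine ⟨Q₁ × Q₂, inferInstance, inferInstance, φ₁.prodMap φ₂, ?_⟩
  intro z hz w hw hzw
  have hz1 : z.1 ∈ V.image Prod.fst := Finset.mem_image_of_mem _ hz
  have hw1 : w.1 ∈ V.image Prod.fst := Finset.mem_image_of_mem _ hw
  have hz2 : z.2 ∈ V.image Prod.snd := Finset.mem_image_of_mem _ hz
  have hw2 : w.2 ∈ V.image Prod.snd := Finset.mem_image_of_mem _ hw
  have e1 : φ₁ z.1 = φ₁ w.1 := congrArg Prod.fst hzw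
  have e2 : φ₂ z.2 = φ₂ w.2 := congrArg Prod.snd hzw
  exact Prod.ext (h₁ (by exact_mod_cast hz1) (by exact_mod_cast hw1) e1)
    (h₂ (by exact_mod_cast hz2) (by exact_mod_cast hw2) e2)

open Pointwise
set_option maxHeartbeats 1600000

/-- The left–right action of `F × F` on `G` (via a surjection `π : F → G` from a free group)
is by isometries for the 0-1 metric `δ`, and it admits approximate local finite models:
for all finite `X₀ ⊆ G`, finite `A ⊆ F × F` and `ε > 0` there is a finite metric space `Y`
with an isometric `F × F`-action and `f : X₀ → Y` realizing the configuration up to `ε`. -/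
theorem free_group_left_right_action_local_finite_models
    {α : Type} {G : Type} [Group G] [DecidableEq G]
    (π : FreeGroup α →* G) (hπ : Function.Surjective π)
    (δ : G → G → ℝ) (hδ : ∀ x y : G, δ x y = if x = y then 0 else 1)
    (X₀ : Finset G) (A : Finset (FreeGroup α × FreeGroup α)) (ε : ℝ) (hε : 0 < ε) :
    (∀ (g h : FreeGroup α) (x y : G),
        δ (π g * x * (π h)⁻¹) (π g * y * (π h)⁻¹) = δ x y) ∧
    ∃ (Y : Type) (_ : MetricSpace Y) (_ : Fintype Y) (_ : MulAction (FreeGroup α × FreeGroup α) Y),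
      (∀ (p : FreeGroup α × FreeGroup α) (a b : Y), dist (p • a) (p • b) = dist a b) ∧
      ∃ f : X₀ → Y, ∀ p ∈ A, ∀ q ∈ A, ∀ x : X₀, ∀ y : X₀,
        |δ (π p.1 * (x : G) * (π p.2)⁻¹) (π q.1 * (y : G) * (π q.2)⁻¹)
          - dist (p • f x) (q • f y)| ≤ ε := by
  classical
  constructor
  · intro g h x y
    rw [hδ, hδ]
    by_cases hxy : x = y
    · rw [if_pos hxy, if_pos (by rw [hxy])]
    · rw [if_neg hxy, if_neg (fun hc => hxy (mul_left_cancel (mul_right_cancel hc)))]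
  -- setup
  let F2 : Type := FreeGroup α × FreeGroup α
  let lft : G → FreeGroup α := Function.surjInv hπ
  have hlft : ∀ g : G, π (lft g) = g := fun g => Function.rightInverse_surjInv hπ g
  let s : G → F2 := fun x => (lft x, 1)
  let t : F2 → F2 → G → G → F2 := fun p q x y => (p * s x)⁻¹ * (q * s y)
  have hgood : ∀ (p q : F2) (x y : G),
      (π (t p q x y).1 = π (t p q x y).2) ↔
        (π p.1 * x * (π p.2)⁻¹ = π q.1 * y * (π q.2)⁻¹) := by
    intro p q x y
    have h1 : (t p q x y).1 = (p.1 * lft x)⁻¹ * (q.1 * lft y) := rfl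
    have h2 : (t p q x y).2 = (p.2 * 1)⁻¹ * (q.2 * 1) := rfl
    rw [h1, h2]
    simp only [map_mul, map_inv, map_one, mul_one, hlft]
    constructor
    · intro h
      rw [inv_mul_eq_iff_eq_mul] at h
      rw [h]
      group
    · intro h
      rw [mul_inv_eq_iff_eq_mul] at h
      rw [h]
      group
  let tup : Finset ((F2 × F2) × G × G) := (A ×ˢ A) ×ˢ (X₀ ×ˢ X₀)
  let allT : Finset F2 := tup.image fun w => t w.1.1 w.1.2 w.2.1 w.2.2
  let goodT : Finset F2 := allT.filter fun z => π z.1 = π z.2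
  let badT : Finset F2 := allT.filter fun z => ¬ π z.1 = π z.2
  let gS : Finset F2 := goodT ∪ goodT.image (·⁻¹) ∪ {1}
  have h1gS : (1 : F2) ∈ gS := Finset.mem_union_right _ (Finset.mem_singleton_self 1)
  have hgSH : ∀ z ∈ gS, π z.1 = π z.2 := by
    intro z hz
    rcases Finset.mem_union.1 hz with hz | hz
    · rcases Finset.mem_union.1 hz with hz | hz
      · exact (Finset.mem_filter.1 hz).2
      · obtain ⟨w, hw, rfl⟩ := Finset.mem_image.1 hz
        have := (Finset.mem_filter.1 hw).2
        show π w.1⁻¹ = π w.2⁻¹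
        rw [map_inv, map_inv, this]
    · rw [Finset.mem_singleton.1 hz]
      simp
  have hgSinv : ∀ z ∈ gS, z⁻¹ ∈ gS := by
    intro z hz
    rcases Finset.mem_union.1 hz with hz | hz
    · rcases Finset.mem_union.1 hz with hz | hz
      · exact Finset.mem_union_left _ (Finset.mem_union_right _ (Finset.mem_image_of_mem _ hz))
      · obtain ⟨w, hw, rfl⟩ := Finset.mem_image.1 hz
        rw [inv_inv]
        exact Finset.mem_union_left _ (Finset.mem_union_left _ hw)
    · rw [Finset.mem_singleton.1 hz]
      simpa using h1gS
  let L : ℕ := max 1 ⌈ε⁻¹⌉₊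
  have hL1 : 1 ≤ L := le_max_left _ _
  have hLpos : (0 : ℝ) < (L : ℝ) := by exact_mod_cast Nat.lt_of_lt_of_le Nat.zero_lt_one hL1
  have hLinv_le : (L : ℝ)⁻¹ ≤ ε := by
    have h1 : ε⁻¹ ≤ (L : ℝ) := le_trans (Nat.le_ceil _) (by exact_mod_cast le_max_right 1 ⌈ε⁻¹⌉₊)
    calc (L : ℝ)⁻¹ ≤ (ε⁻¹)⁻¹ := by
          apply inv_anti₀ (by positivity) h1
      _ = ε := inv_inv ε
  let Bγ : ℕ → Finset F2 := fun n => Nat.rec {1} (fun _ Bk => gS * Bk) n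
  have hBγ0 : Bγ 0 = {1} := rfl
  have hBγs : ∀ k, Bγ (k + 1) = gS * Bγ k := fun k => rfl
  have hBγH : ∀ k, ∀ z ∈ Bγ k, π z.1 = π z.2 := by
    intro k
    induction k with
    | zero =>
      intro z hz
      have hz1 : z = (1 : F2) := Finset.mem_singleton.1 hz
      rw [hz1]; simp
    | succ k ih =>
      intro z hz
      rw [hBγs] at hz
      obtain ⟨u, hu, v, hv, rfl⟩ := Finset.mem_mul.1 hz
      show π (u.1 * v.1) = π (u.2 * v.2)
      rw [map_mul, map_mul, hgSH u hu, ih v hv]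
  have hBγmono : ∀ j k, j ≤ k → Bγ j ⊆ Bγ k := by
    intro j k hjk
    induction hjk with
    | refl => exact Finset.Subset.refl _
    | step h ih =>
      refine ih.trans ?_
      rename_i m _
      intro z hz
      rw [hBγs]
      simpa using Finset.mul_mem_mul h1gS hz
  let Vsep : Finset F2 := Bγ L ∪ badT
  obtain ⟨Q, hQg, hQf, φ, hinj⟩ := prodFree_finite_quotient_injOn Vsep
  letI := hQg; letI := hQf
  let SQ : Finset Q := gS.image φ
  let BQ : ℕ → Finset Q := fun n => Nat.rec {1} (fun _ Bk => SQ * Bk) n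
  have hBQ0 : BQ 0 = {1} := rfl
  have hBQs : ∀ k, BQ (k + 1) = SQ * BQ k := fun k => rfl
  have hBQim : ∀ k, BQ k = (Bγ k).image φ := by
    intro k
    induction k with
    | zero => rw [hBQ0, hBγ0]; simp
    | succ k ih =>
      rw [hBQs, hBγs, ih, Finset.image_mul]
  have h1SQ : (1 : Q) ∈ SQ := by
    have := Finset.mem_image_of_mem φ h1gS
    rwa [map_one] at this
  have hBQmono : ∀ j k, j ≤ k → BQ j ⊆ BQ k := by
    intro j k hjk
    induction hjk with
    | refl => exact Finset.Subset.refl _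
    | step h ih =>
      refine ih.trans ?_
      intro z hz
      rw [hBQs]
      simpa using Finset.mul_mem_mul h1SQ hz
  have hBQadd : ∀ j k (z w : Q), z ∈ BQ j → w ∈ BQ k → z * w ∈ BQ (j + k) := by
    intro j
    induction j with
    | zero =>
      intro k z w hz hw
      rw [hBQ0, Finset.mem_singleton] at hz
      rw [hz, one_mul, Nat.zero_add]
      exact hw
    | succ j ih =>
      intro k z w hz hw
      rw [hBQs] at hz
      obtain ⟨u, hu, v, hv, rfl⟩ := Finset.mem_mul.1 hz
      rw [Nat.succ_add, hBQs, mul_assoc]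
      exact Finset.mul_mem_mul hu (ih k v w hv hw)
  have hSQinv : ∀ z ∈ SQ, z⁻¹ ∈ SQ := by
    intro z hz
    obtain ⟨w, hw, rfl⟩ := Finset.mem_image.1 hz
    rw [← map_inv]
    exact Finset.mem_image_of_mem _ (hgSinv w hw)
  have hBQinv : ∀ k (z : Q), z ∈ BQ k → z⁻¹ ∈ BQ k := by
    intro k
    induction k with
    | zero => intro z hz; rw [hBQ0, Finset.mem_singleton] at hz ⊢; rw [hz, inv_one]
    | succ k ih =>
      intro z hz
      rw [hBQs] at hz
      obtain ⟨u, hu, v, hv, rfl⟩ := Finset.mem_mul.1 hz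
      rw [mul_inv_rev]
      have h1 : u⁻¹ ∈ BQ 1 := by
        have h2 := Finset.mul_mem_mul (hSQinv u hu) (Finset.mem_singleton_self (1 : Q))
        rw [mul_one] at h2
        exact h2
      exact hBQadd k 1 v⁻¹ u⁻¹ (ih v hv) h1
  -- length function
  have hS'ne : ∀ z : Q, {k : ℕ | z ∈ BQ k ∨ k = L + 1}.Nonempty := fun z => ⟨L + 1, Or.inr rfl⟩
  let ρ : Q → ℕ := fun z => sInf {k : ℕ | z ∈ BQ k ∨ k = L + 1}
  have hρ_le : ∀ (z : Q) (k : ℕ), z ∈ BQ k → ρ z ≤ k := fun z k hz => Nat.sInf_le (Or.inl hz)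
  have hρ_top : ∀ z : Q, ρ z ≤ L + 1 := fun z => Nat.sInf_le (Or.inr rfl)
  have hρ_mem : ∀ z : Q, ρ z ≤ L → z ∈ BQ (ρ z) := by
    intro z hz
    rcases Nat.sInf_mem (hS'ne z) with h | h
    · exact h
    · exfalso
      have h2 : ρ z = L + 1 := h
      omega
  have hρ_one : ρ (1 : Q) = 0 :=
    Nat.le_zero.1 (hρ_le 1 0 (by rw [hBQ0]; exact Finset.mem_singleton_self 1))
  let ℓv : Q → ℝ := fun z => min 1 ((L : ℝ)⁻¹ * (ρ z : ℝ))
  have hℓ_nonneg : ∀ z, 0 ≤ ℓv z := fun z => le_min zero_le_one (by positivity)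
  have hℓ_le_one : ∀ z, ℓv z ≤ 1 := fun z => min_le_left _ _
  have hℓ_one : ℓv 1 = 0 := by
    show min 1 ((L : ℝ)⁻¹ * ((ρ (1:Q) : ℕ) : ℝ)) = 0
    rw [hρ_one]
    simp
  have hℓ_eq_zero : ∀ z, ℓv z = 0 → z = 1 := by
    intro z hz
    have h1 : min 1 ((L : ℝ)⁻¹ * (ρ z : ℝ)) = 0 := hz
    have h2 : (L : ℝ)⁻¹ * (ρ z : ℝ) = 0 := by
      rcases min_eq_iff.1 h1 with ⟨h, _⟩ | ⟨h, _⟩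
      · exfalso; linarith
      · exact h
    have h3 : (ρ z : ℝ) = 0 := by
      rcases mul_eq_zero.1 h2 with h | h
      · exfalso; have : (L:ℝ)⁻¹ > 0 := by positivity
        linarith
      · exact h
    have h4 : ρ z = 0 := by exact_mod_cast h3
    have h5 := hρ_mem z (by omega)
    rw [h4, hBQ0] at h5
    exact Finset.mem_singleton.1 h5
  have hρ_inv_le : ∀ z : Q, ρ z⁻¹ ≤ ρ z := by
    intro z
    by_cases h : ρ z ≤ L
    · exact hρ_le _ _ (hBQinv _ _ (hρ_mem z h))
    · have h1 := hρ_top z⁻¹; have h2 := hρ_top z; omega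
  have hρ_inv : ∀ z : Q, ρ z⁻¹ = ρ z := by
    intro z
    refine le_antisymm (hρ_inv_le z) ?_
    have := hρ_inv_le z⁻¹
    rwa [inv_inv] at this
  have hℓ_symm : ∀ z : Q, ℓv z⁻¹ = ℓv z := by
    intro z
    show min 1 ((L : ℝ)⁻¹ * (ρ z⁻¹ : ℝ)) = min 1 ((L : ℝ)⁻¹ * (ρ z : ℝ))
    rw [hρ_inv]
  have hℓ_sub : ∀ z w : Q, ℓv (z * w) ≤ ℓv z + ℓv w := by
    intro z w
    by_cases hz : (1:ℝ) ≤ (L:ℝ)⁻¹ * (ρ z : ℝ)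
    · have h1 : ℓv z = 1 := min_eq_left hz
      have h2 := hℓ_le_one (z*w); have h3 := hℓ_nonneg w
      rw [h1]; linarith
    · by_cases hw : (1:ℝ) ≤ (L:ℝ)⁻¹ * (ρ w : ℝ)
      · have h1 : ℓv w = 1 := min_eq_left hw
        have h2 := hℓ_le_one (z*w); have h3 := hℓ_nonneg z
        rw [h1]; linarith
      · push_neg at hz hw
        have hcast : ∀ u : Q, (L:ℝ)⁻¹ * (ρ u : ℝ) < 1 → ρ u ≤ L := by
          intro u hu
          have h1 : ((ρ u : ℕ) : ℝ) < (L : ℝ) := by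
            have h2 : (L:ℝ) * ((L:ℝ)⁻¹ * (ρ u : ℝ)) < (L:ℝ) * 1 :=
              mul_lt_mul_of_pos_left hu hLpos
            rw [← mul_assoc, mul_inv_cancel₀ (ne_of_gt hLpos), one_mul, mul_one] at h2
            exact h2
          have h3 : ρ u < L := by exact_mod_cast h1
          omega
        have hzL := hcast z hz
        have hwL := hcast w hw
        have hmem := hBQadd (ρ z) (ρ w) z w (hρ_mem z hzL) (hρ_mem w hwL)
        have hρzw : ρ (z * w) ≤ ρ z + ρ w := hρ_le _ _ hmem
        have h1 : ℓv z = (L:ℝ)⁻¹ * (ρ z : ℝ) := min_eq_right (le_of_lt hz)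
        have h2 : ℓv w = (L:ℝ)⁻¹ * (ρ w : ℝ) := min_eq_right (le_of_lt hw)
        rw [h1, h2]
        calc ℓv (z*w) ≤ (L:ℝ)⁻¹ * (ρ (z*w) : ℝ) := min_le_right _ _
          _ ≤ (L:ℝ)⁻¹ * ((ρ z + ρ w : ℕ) : ℝ) := by
              apply mul_le_mul_of_nonneg_left _ (by positivity)
              exact_mod_cast hρzw
          _ = (L:ℝ)⁻¹ * (ρ z : ℝ) + (L:ℝ)⁻¹ * (ρ w : ℝ) := by push_cast; ring
  -- metric space
  letI MS : MetricSpace Q :=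
    { dist := fun u v => ℓv (u⁻¹ * v)
      dist_self := fun u => by
        show ℓv (u⁻¹ * u) = 0
        rw [inv_mul_cancel]; exact hℓ_one
      dist_comm := fun u v => by
        show ℓv (u⁻¹ * v) = ℓv (v⁻¹ * u)
        have h := hℓ_symm (u⁻¹ * v)
        rw [mul_inv_rev, inv_inv] at h
        exact h.symm
      dist_triangle := fun u v w => by
        show ℓv (u⁻¹ * w) ≤ ℓv (u⁻¹ * v) + ℓv (v⁻¹ * w)
        have h : u⁻¹ * w = (u⁻¹ * v) * (v⁻¹ * w) := by group
        rw [h]; exact hℓ_sub _ _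
      eq_of_dist_eq_zero := fun {u v} h => by
        have h1 : u⁻¹ * v = 1 := hℓ_eq_zero _ h
        exact (inv_mul_eq_one.1 h1) }
  letI MA : MulAction F2 Q :=
    { smul := fun p y => φ p * y
      one_smul := fun y => by show φ 1 * y = y; rw [map_one, one_mul]
      mul_smul := fun p q y => by
        show φ (p * q) * y = φ p * (φ q * y)
        rw [map_mul, mul_assoc] }
  have hsmul : ∀ (p : F2) (y : Q), p • y = φ p * y := fun _ _ => rfl
  have hdist : ∀ u v : Q, dist u v = ℓv (u⁻¹ * v) := fun _ _ => rfl
  let f : {x // x ∈ X₀} → Q := fun x => φ (s (x : G))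
  refine ⟨Q, MS, inferInstance, MA, ?_, f, ?_⟩
  · intro p a b
    rw [hsmul, hsmul, hdist, hdist]
    congr 1
    group
  · intro p hp q hq x y
    have hmemT : t p q (x : G) (y : G) ∈ allT := by
      have h1 : (((p, q), ((x : G), (y : G))) : (F2 × F2) × G × G) ∈ tup :=
        Finset.mem_product.2 ⟨Finset.mem_product.2 ⟨hp, hq⟩, Finset.mem_product.2 ⟨x.2, y.2⟩⟩
      exact Finset.mem_image.2 ⟨_, h1, rfl⟩
    have hdval : dist (p • f x) (q • f y) = ℓv (φ (t p q (x : G) (y : G))) := by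
      rw [hsmul, hsmul, hdist]
      congr 1
      show (φ p * φ (s (x:G)))⁻¹ * (φ q * φ (s (y:G))) = φ ((p * s (x:G))⁻¹ * (q * s (y:G)))
      rw [map_mul, map_inv, map_mul, map_mul]
    rw [hdval]
    by_cases hc : π p.1 * (x : G) * (π p.2)⁻¹ = π q.1 * (y : G) * (π q.2)⁻¹
    · rw [hδ, if_pos hc]
      have hzgood : t p q (x:G) (y:G) ∈ goodT :=
        Finset.mem_filter.2 ⟨hmemT, (hgood p q (x:G) (y:G)).2 hc⟩
      have hSQmem : φ (t p q (x:G) (y:G)) ∈ SQ :=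
        Finset.mem_image_of_mem _ (Finset.mem_union_left _ (Finset.mem_union_left _ hzgood))
      have h1 : φ (t p q (x:G) (y:G)) ∈ BQ 1 := by
        have h3 := Finset.mul_mem_mul hSQmem (Finset.mem_singleton_self (1:Q))
        rw [mul_one] at h3
        exact h3
      have hρ1 : ρ (φ (t p q (x:G) (y:G))) ≤ 1 := hρ_le _ _ h1
      have hld : ℓv (φ (t p q (x:G) (y:G))) ≤ ε := by
        calc ℓv (φ (t p q (x:G) (y:G)))
            ≤ (L:ℝ)⁻¹ * (ρ (φ (t p q (x:G) (y:G))) : ℝ) := min_le_right _ _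
          _ ≤ (L:ℝ)⁻¹ * 1 := by
              apply mul_le_mul_of_nonneg_left _ (by positivity)
              exact_mod_cast hρ1
          _ = (L:ℝ)⁻¹ := mul_one _
          _ ≤ ε := hLinv_le
      rw [zero_sub, abs_neg, abs_of_nonneg (hℓ_nonneg _)]
      exact hld
    · rw [hδ, if_neg hc]
      have hzbad : t p q (x:G) (y:G) ∈ badT :=
        Finset.mem_filter.2 ⟨hmemT, fun hh => hc ((hgood p q (x:G) (y:G)).1 hh)⟩
      have hnot : ∀ k, k ≤ L → φ (t p q (x:G) (y:G)) ∉ BQ k := by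
        intro k hk hmem
        rw [hBQim k] at hmem
        obtain ⟨u, hu, hux⟩ := Finset.mem_image.1 hmem
        have huV : u ∈ Vsep := Finset.mem_union_left _ (hBγmono k L hk hu)
        have htV : t p q (x:G) (y:G) ∈ Vsep := Finset.mem_union_right _ hzbad
        have heq : u = t p q (x:G) (y:G) :=
          hinj (Finset.mem_coe.2 huV) (Finset.mem_coe.2 htV) hux
        rw [heq] at hu
        exact (fun hh => hc ((hgood p q (x:G) (y:G)).1 hh)) (hBγH k _ hu)
      have hρbad : ρ (φ (t p q (x:G) (y:G))) = L + 1 := by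
        have h1 := hρ_top (φ (t p q (x:G) (y:G)))
        have h2 : ¬ ρ (φ (t p q (x:G) (y:G))) ≤ L := fun hle => hnot _ hle (hρ_mem _ hle)
        omega
      have hlv1 : ℓv (φ (t p q (x:G) (y:G))) = 1 := by
        show min 1 ((L:ℝ)⁻¹ * ((ρ (φ (t p q (x:G) (y:G))) : ℕ) : ℝ)) = 1
        rw [hρbad]
        apply min_eq_left
        have h3 : (L:ℝ)⁻¹ * (L:ℝ) = 1 := inv_mul_cancel₀ (ne_of_gt hLpos)
        have h4 : (L:ℝ)⁻¹ * (((L:ℕ) + 1 : ℕ) : ℝ) = (L:ℝ)⁻¹ * (L:ℝ) + (L:ℝ)⁻¹ := by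
          push_cast; ring
        have h5 : (0:ℝ) ≤ (L:ℝ)⁻¹ := by positivity
        rw [h4, h3]
        linarith
      rw [hlv1, sub_self, abs_zero]
      linarith
end

section
/- Let H be a group, K ≤ H a subgroup, and X a nonempty set. Let ρ be a metric on K × X that is invariant under left multiplication by elements of K in the first coordinate and bounded above by a constant C > 0. Then there exists a metric η on H × X that is invariant under left multiplication by elements of H in the first coordinate and extends ρ, i.e. η((k,x),(k',y)) = ρ((k,x),(k',y)) for all k, k' ∈ K and x, y ∈ X. -/
/-- A bounded metric on `K × X` (for a subgroup `K ≤ H`) which is invariant under left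
multiplication by elements of `K` in the first coordinate extends to a metric on `H × X`
invariant under left multiplication by elements of `H`. -/
theorem extend_invariant_metric_from_subgroup
    {H X : Type} [Group H] (K : Subgroup H) [Nonempty X]
    (ρ : K × X → K × X → ℝ)
    (hrefl : ∀ z, ρ z z = 0)
    (hsep : ∀ z w, ρ z w = 0 → z = w)
    (hsymm : ∀ z w, ρ z w = ρ w z)
    (htri : ∀ z w u, ρ z u ≤ ρ z w + ρ w u)
    (hinvρ : ∀ (k g g' : K) (x y : X), ρ (k * g, x) (k * g', y) = ρ (g, x) (g', y))
    (C : ℝ) (hC : 0 < C) (hbound : ∀ z w, ρ z w ≤ C) :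
    ∃ η : H × X → H × X → ℝ,
      (∀ z, η z z = 0) ∧
      (∀ z w, η z w = 0 → z = w) ∧
      (∀ z w, η z w = η w z) ∧
      (∀ z w u, η z u ≤ η z w + η w u) ∧
      (∀ (h g g' : H) (x y : X), η (h * g, x) (h * g', y) = η (g, x) (g', y)) ∧
      (∀ (k k' : K) (x y : X), η ((k : H), x) ((k' : H), y) = ρ (k, x) (k', y)) := by
  classical
  have hnn : ∀ z w, 0 ≤ ρ z w := by
    intro z w
    have h1 := htri z w z
    rw [hrefl, hsymm w z] at h1
    linarith
  refine ⟨fun z w =>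
    if h : z.1⁻¹ * w.1 ∈ K then ρ (1, z.2) (⟨z.1⁻¹ * w.1, h⟩, w.2) else C,
    ?_, ?_, ?_, ?_, ?_, ?_⟩
  · intro z
    dsimp only
    have h1 : z.1⁻¹ * z.1 ∈ K := by rw [inv_mul_cancel]; exact one_mem K
    simp only [dif_pos h1]
    have h2 : (⟨z.1⁻¹ * z.1, h1⟩ : K) = 1 := by ext; simp
    rw [h2]; exact hrefl _
  · intro z w h
    dsimp only at h
    by_cases hk : z.1⁻¹ * w.1 ∈ K
    · rw [dif_pos hk] at h
      have := hsep _ _ h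
      obtain ⟨h1, h2⟩ := Prod.ext_iff.mp this
      have h3 : z.1⁻¹ * w.1 = 1 := (congrArg Subtype.val h1).symm
      exact Prod.ext (inv_mul_eq_one.mp h3) h2
    · rw [dif_neg hk] at h
      exact absurd h (ne_of_gt hC)
  · intro z w
    dsimp only
    by_cases hk : z.1⁻¹ * w.1 ∈ K
    · have hk' : w.1⁻¹ * z.1 ∈ K := by
        have := K.inv_mem hk; simpa [mul_inv_rev] using this
      rw [dif_pos hk, dif_pos hk']
      set a : K := ⟨z.1⁻¹ * w.1, hk⟩
      have ha : (⟨w.1⁻¹ * z.1, hk'⟩ : K) = a⁻¹ := by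
        ext; simp [a, mul_inv_rev]
      rw [ha]
      have := hinvρ a⁻¹ 1 a z.2 w.2
      rw [mul_one, inv_mul_cancel] at this
      rw [← this, hsymm]
    · have hk' : ¬ w.1⁻¹ * z.1 ∈ K := by
        intro hc; apply hk
        have := K.inv_mem hc; simpa [mul_inv_rev] using this
      rw [dif_neg hk, dif_neg hk']
  · intro z w u
    dsimp only
    by_cases hzw : z.1⁻¹ * w.1 ∈ K <;> by_cases hwu : w.1⁻¹ * u.1 ∈ K
    · have hzu : z.1⁻¹ * u.1 ∈ K := by
        have := K.mul_mem hzw hwu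
        simpa [mul_assoc] using this
      rw [dif_pos hzw, dif_pos hwu, dif_pos hzu]
      set a : K := ⟨z.1⁻¹ * w.1, hzw⟩
      set b : K := ⟨w.1⁻¹ * u.1, hwu⟩
      have hab : (⟨z.1⁻¹ * u.1, hzu⟩ : K) = a * b := by
        ext; simp [a, b, mul_assoc]
      rw [hab]
      have h2 := hinvρ a 1 b w.2 u.2
      rw [mul_one] at h2
      calc ρ (1, z.2) (a * b, u.2) ≤ ρ (1, z.2) (a, w.2) + ρ (a, w.2) (a * b, u.2) :=
            htri _ _ _
        _ = ρ (1, z.2) (a, w.2) + ρ (1, w.2) (b, u.2) := by rw [h2]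
    · rw [dif_pos hzw, dif_neg hwu]
      split
      · have := hbound (1, z.2) (⟨z.1⁻¹ * u.1, by assumption⟩, u.2)
        have := hnn (1, z.2) (⟨z.1⁻¹ * w.1, hzw⟩, w.2)
        linarith
      · have := hnn (1, z.2) (⟨z.1⁻¹ * w.1, hzw⟩, w.2)
        linarith
    · rw [dif_neg hzw, dif_pos hwu]
      split
      · have := hbound (1, z.2) (⟨z.1⁻¹ * u.1, by assumption⟩, u.2)
        have := hnn (1, w.2) (⟨w.1⁻¹ * u.1, hwu⟩, u.2)
        linarith
      · have := hnn (1, w.2) (⟨w.1⁻¹ * u.1, hwu⟩, u.2)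
        linarith
    · rw [dif_neg hzw, dif_neg hwu]
      split
      · have := hbound (1, z.2) (⟨z.1⁻¹ * u.1, by assumption⟩, u.2)
        linarith
      · linarith
  · intro h g g' x y
    have he : (h * g)⁻¹ * (h * g') = g⁻¹ * g' := by group
    simp only [he]
  · intro k k' x y
    dsimp only
    have hk : ((k : H))⁻¹ * (k' : H) ∈ K := by
      exact_mod_cast (k⁻¹ * k').2
    rw [dif_pos hk]
    have h1 : (⟨((k : H))⁻¹ * (k' : H), hk⟩ : K) = k⁻¹ * k' := rfl
    rw [h1]
    have := hinvρ k 1 (k⁻¹ * k') x y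
    rw [mul_one, mul_inv_cancel_left] at this
    exact this.symm
end
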